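/- arXiv:1812.08397 — 2 statements merged into one kernel-verified Lean document; each statement's English description precedes it below -/
import Mathlib

section
/- Suppose T : (L^0)^n → (L^0)^n is a bijection which has the local property and maps each L^0-line segment onto an L^0-line segment, i.e., for any two distinct x, y ∈ (L^0)^n the image of the L^0-line segment [x,y] under T equals [T(x), T(y)]. Then T maps each L^0-line onto an L^0-line, i.e., for any two distinct x, y ∈ (L^0)^n the image of l(x,y) under T equals l(T(x), T(y)). -/
/-!
Statements from "The fundamental theorem of affine geometry in `(L⁰)ⁿ`" (Wu–Long).

`L⁰`, the algebra of equivalence classes (under `P`-a.e. equality) of real valued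
random variables on a probability space `(Ω, F, P)`, is modeled as `Ω →ₘ[P] ℝ`,
and `(L⁰)ⁿ` as `Fin n → (Ω →ₘ[P] ℝ)` with the pointwise `L⁰`-module structure.
-/

open MeasureTheory

noncomputable section

variable {Ω : Type*} [MeasurableSpace Ω] {P : Measure Ω}

/-- `L⁰ = Ω →ₘ[P] ℝ` is a commutative ring under the pointwise a.e. operations. -/
instance : CommRing (Ω →ₘ[P] ℝ) :=
  { (inferInstance : AddCommGroup (Ω →ₘ[P] ℝ)),
    (inferInstance : CommMonoid (Ω →ₘ[P] ℝ)) with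
    left_distrib := fun a b c => AEEqFun.toGerm_injective <| by
      simp only [AEEqFun.mul_toGerm, AEEqFun.add_toGerm, mul_add]
    right_distrib := fun a b c => AEEqFun.toGerm_injective <| by
      simp only [AEEqFun.mul_toGerm, AEEqFun.add_toGerm, add_mul]
    zero_mul := fun a => AEEqFun.toGerm_injective <| by
      simp only [AEEqFun.mul_toGerm, AEEqFun.zero_toGerm, zero_mul]
    mul_zero := fun a => AEEqFun.toGerm_injective <| by
      simp only [AEEqFun.mul_toGerm, AEEqFun.zero_toGerm, mul_zero] }

/-- `Ĩ_A` : the equivalence class of the indicator function of a measurable set `A`. -/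
def ind (P : Measure Ω) {A : Set Ω} (hA : MeasurableSet A) : Ω →ₘ[P] ℝ :=
  AEEqFun.mk (A.indicator fun _ => (1 : ℝ)) (aestronglyMeasurable_const.indicator hA)

namespace WuLongAux

open AEEqFun

lemma mk_ext {f g : Ω → ℝ} (hf : AEStronglyMeasurable f P) (hg : AEStronglyMeasurable g P)
    (h : ∀ ω, f ω = g ω) : (mk f hf : Ω →ₘ[P] ℝ) = mk g hg :=
  mk_eq_mk.2 (Filter.Eventually.of_forall h)

lemma mk_sub_mk' (f g : Ω → ℝ) (hf : AEStronglyMeasurable f P) (hg : AEStronglyMeasurable g P) :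
    (mk f hf : Ω →ₘ[P] ℝ) - mk g hg = mk (fun ω => f ω - g ω) (hf.sub hg) := by
  rw [sub_eq_add_neg, neg_mk, mk_add_mk]
  exact mk_ext _ _ fun ω => by simp [sub_eq_add_neg]

lemma exists_rep (f : Ω →ₘ[P] ℝ) :
    ∃ g : Ω → ℝ, ∃ hg : Measurable g, f = mk g hg.aestronglyMeasurable := by
  have h := f.aestronglyMeasurable
  have ham : AEMeasurable (⇑f) P := h.aemeasurable
  refine ⟨ham.mk f, ham.measurable_mk, ?_⟩
  conv_lhs => rw [← AEEqFun.mk_coeFn f]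
  exact mk_eq_mk.2 ham.ae_eq_mk

lemma ind_eq {A : Set Ω} (hA : MeasurableSet A) :
    ind P hA = mk (A.indicator fun _ => (1 : ℝ)) (aestronglyMeasurable_const.indicator hA) := rfl

lemma ind_mul_self {A : Set Ω} (hA : MeasurableSet A) : ind P hA * ind P hA = ind P hA := by
  rw [ind_eq, mk_mul_mk]
  exact mk_ext _ _ fun ω => by
    by_cases h : ω ∈ A <;> simp [Set.indicator_apply, h]

lemma ind_mul_compl {A : Set Ω} (hA : MeasurableSet A) :
    ind P hA * ind P hA.compl = 0 := by
  rw [ind_eq, ind_eq, mk_mul_mk, zero_def]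
  exact mk_ext _ _ fun ω => by
    by_cases h : ω ∈ A <;> simp [Set.indicator_apply, h]

lemma ind_add_compl {A : Set Ω} (hA : MeasurableSet A) :
    ind P hA + ind P hA.compl = 1 := by
  rw [ind_eq, ind_eq, mk_add_mk, one_def]
  exact mk_ext _ _ fun ω => by
    by_cases h : ω ∈ A <;> simp [Set.indicator_apply, h]

variable {n : ℕ} (T : (Fin n → Ω →ₘ[P] ℝ) → (Fin n → Ω →ₘ[P] ℝ))

lemma loc_inj (hinj : Function.Injective T)
    (hloc : ∀ (x : Fin n → Ω →ₘ[P] ℝ) (A : Set Ω) (hA : MeasurableSet A),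
        ind P hA • T (ind P hA • x) = ind P hA • T x)
    {A : Set Ω} (hA : MeasurableSet A) {u v : Fin n → Ω →ₘ[P] ℝ}
    (h : ind P hA • T u = ind P hA • T v) :
    ind P hA • u = ind P hA • v := by
  set e := ind P hA with he_def
  set e' := ind P hA.compl with he'_def
  have hee : e * e = e := ind_mul_self hA
  have hee' : e * e' = 0 := ind_mul_compl hA
  have he'e' : e' * e' = e' := ind_mul_self hA.compl
  have he'e : e' * e = 0 := by rw [mul_comm]; exact hee'
  have hsum : e + e' = 1 := ind_add_compl hA
  set w : Fin n → Ω →ₘ[P] ℝ := e • u + e' • v with hw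
  have hew : e • w = e • u := by
    funext i
    simp only [hw, Pi.add_apply, Pi.smul_apply, smul_eq_mul]
    linear_combination u i * hee + v i * hee'
  have he'w : e' • w = e' • v := by
    funext i
    simp only [hw, Pi.add_apply, Pi.smul_apply, smul_eq_mul]
    linear_combination u i * he'e + v i * he'e'
  have h1 : e • T w = e • T u := by
    rw [← hloc w A hA, hew, hloc u A hA]
  have h2 : e' • T w = e' • T v := by
    rw [← hloc w Aᶜ hA.compl, he'w, hloc v Aᶜ hA.compl]
  have hTwv : T w = T v := by
    funext i
    have e1 := congrFun h1 i
    have e2 := congrFun h2 i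
    have e3 := congrFun h i
    simp only [Pi.smul_apply, smul_eq_mul] at e1 e2 e3
    linear_combination e1 + e2 + e3 - (T w i - T v i) * hsum
  rw [← hew, hinj hTwv]

lemma loc_map
    (hloc : ∀ (x : Fin n → Ω →ₘ[P] ℝ) (A : Set Ω) (hA : MeasurableSet A),
        ind P hA • T (ind P hA • x) = ind P hA • T x)
    {A : Set Ω} (hA : MeasurableSet A) {u v : Fin n → Ω →ₘ[P] ℝ}
    (h : ind P hA • u = ind P hA • v) :
    ind P hA • T u = ind P hA • T v := by
  rw [← hloc u A hA, ← hloc v A hA, h]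

lemma core (hinj : Function.Injective T)
    (hloc : ∀ (x : Fin n → Ω →ₘ[P] ℝ) (A : Set Ω) (hA : MeasurableSet A),
        ind P hA • T (ind P hA • x) = ind P hA • T x)
    (hseg : ∀ x y : Fin n → Ω →ₘ[P] ℝ, x ≠ y →
        T '' {z | ∃ lam : Ω →ₘ[P] ℝ, 0 ≤ lam ∧ lam ≤ 1 ∧ z = lam • x + (1 - lam) • y}
          = {z | ∃ lam : Ω →ₘ[P] ℝ, 0 ≤ lam ∧ lam ≤ 1 ∧
              z = lam • T x + (1 - lam) • T y})
    {x y : Fin n → Ω →ₘ[P] ℝ} (hxy : x ≠ y) :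
    T '' {z | ∃ lam : Ω →ₘ[P] ℝ, z = lam • x + (1 - lam) • y}
      ⊆ {z | ∃ lam : Ω →ₘ[P] ℝ, z = lam • T x + (1 - lam) • T y} := by
  rintro _ ⟨w, ⟨lam, rfl⟩, rfl⟩
  obtain ⟨g, hgm, hlam⟩ := exists_rep lam
  have hd : ∀ ω, (0:ℝ) < max (g ω) 1 - min (g ω) 0 := fun ω => by
    have h1 : (1:ℝ) ≤ max (g ω) 1 := le_max_right _ _
    have h2 : min (g ω) 0 ≤ 0 := min_le_right _ _
    linarith
  set μR : Ω →ₘ[P] ℝ := mk (fun ω => max (g ω) 1)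
    ((hgm.max measurable_const).aestronglyMeasurable) with hμR
  set νR : Ω →ₘ[P] ℝ := mk (fun ω => min (g ω) 0)
    ((hgm.min measurable_const).aestronglyMeasurable) with hνR
  have hdm : Measurable (fun ω => (max (g ω) 1 - min (g ω) 0)⁻¹) :=
    ((hgm.max measurable_const).sub (hgm.min measurable_const)).inv
  set dinv : Ω →ₘ[P] ℝ := mk _ hdm.aestronglyMeasurable with hdinvd
  have hdinv : dinv * (μR - νR) = 1 := by
    rw [hdinvd, hμR, hνR, mk_sub_mk', mk_mul_mk, one_def]
    exact mk_ext _ _ fun ω => by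
      simp only [Pi.mul_apply]
      exact inv_mul_cancel₀ (hd ω).ne'
  set a := μR • x + (1 - μR) • y with ha
  set b := νR • x + (1 - νR) • y with hb
  have hai : ∀ i, a i = μR * x i + (1 - μR) * y i := fun i => by
    rw [ha]; simp [smul_eq_mul]
  have hbi : ∀ i, b i = νR * x i + (1 - νR) * y i := fun i => by
    rw [hb]; simp [smul_eq_mul]
  have hane : a ≠ b := by
    intro h
    apply hxy
    funext i
    have h0 : (μR - νR) * (x i - y i) = 0 := by
      have := congrFun h i
      rw [hai i, hbi i] at this
      linear_combination this
    have hxi : x i - y i = 0 := by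
      calc x i - y i = (dinv * (μR - νR)) * (x i - y i) := by rw [hdinv, one_mul]
        _ = dinv * ((μR - νR) * (x i - y i)) := by ring
        _ = 0 := by rw [h0, mul_zero]
    exact sub_eq_zero.mp hxi
  -- coefficients for x, y, w inside [a, b]
  set sx : Ω →ₘ[P] ℝ := mk (fun ω => (1 - min (g ω) 0) / (max (g ω) 1 - min (g ω) 0))
      (((measurable_const.sub (hgm.min measurable_const)).div
        ((hgm.max measurable_const).sub (hgm.min measurable_const))).aestronglyMeasurable)
      with hsxd
  set sy : Ω →ₘ[P] ℝ := mk (fun ω => (0 - min (g ω) 0) / (max (g ω) 1 - min (g ω) 0))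
      (((measurable_const.sub (hgm.min measurable_const)).div
        ((hgm.max measurable_const).sub (hgm.min measurable_const))).aestronglyMeasurable)
      with hsyd
  set sw : Ω →ₘ[P] ℝ := mk (fun ω => (g ω - min (g ω) 0) / (max (g ω) 1 - min (g ω) 0))
      (((hgm.sub (hgm.min measurable_const)).div
        ((hgm.max measurable_const).sub (hgm.min measurable_const))).aestronglyMeasurable)
      with hswd
  have hsx0 : 0 ≤ sx := by
    rw [hsxd, zero_def]
    refine (mk_le_mk _ _).2 (Filter.Eventually.of_forall fun ω => ?_)
    have h1 := hd ω
    have h2 : min (g ω) 0 ≤ 0 := min_le_right _ _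
    exact div_nonneg (by linarith) h1.le
  have hsx1 : sx ≤ 1 := by
    rw [hsxd, one_def]
    refine (mk_le_mk _ _).2 (Filter.Eventually.of_forall fun ω => ?_)
    have h1 := hd ω
    have h2 : (1:ℝ) ≤ max (g ω) 1 := le_max_right _ _
    rw [div_le_one h1]
    linarith
  have hsy0 : 0 ≤ sy := by
    rw [hsyd, zero_def]
    refine (mk_le_mk _ _).2 (Filter.Eventually.of_forall fun ω => ?_)
    have h1 := hd ω
    have h2 : min (g ω) 0 ≤ 0 := min_le_right _ _
    exact div_nonneg (by linarith) h1.le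
  have hsy1 : sy ≤ 1 := by
    rw [hsyd, one_def]
    refine (mk_le_mk _ _).2 (Filter.Eventually.of_forall fun ω => ?_)
    have h1 := hd ω
    have h2 : (1:ℝ) ≤ max (g ω) 1 := le_max_right _ _
    rw [div_le_one h1]
    linarith
  have hsw0 : 0 ≤ sw := by
    rw [hswd, zero_def]
    refine (mk_le_mk _ _).2 (Filter.Eventually.of_forall fun ω => ?_)
    have h1 := hd ω
    have h2 : min (g ω) 0 ≤ g ω := min_le_left _ _
    exact div_nonneg (by linarith) h1.le
  have hsw1 : sw ≤ 1 := by
    rw [hswd, one_def]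
    refine (mk_le_mk _ _).2 (Filter.Eventually.of_forall fun ω => ?_)
    have h1 := hd ω
    have h2 : g ω ≤ max (g ω) 1 := le_max_left _ _
    rw [div_le_one h1]
    linarith
  have hkx : sx * (μR - νR) + νR = 1 := by
    rw [hsxd, hμR, hνR, mk_sub_mk', mk_mul_mk, mk_add_mk, one_def]
    refine mk_ext _ _ fun ω => ?_
    simp only [Pi.mul_apply, Pi.add_apply]
    rw [div_mul_cancel₀ _ (hd ω).ne']
    ring
  have hky : sy * (μR - νR) + νR = 0 := by
    rw [hsyd, hμR, hνR, mk_sub_mk', mk_mul_mk, mk_add_mk, zero_def]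
    refine mk_ext _ _ fun ω => ?_
    simp only [Pi.mul_apply, Pi.add_apply]
    rw [div_mul_cancel₀ _ (hd ω).ne']
    ring
  have hkw : sw * (μR - νR) + νR = lam := by
    rw [hswd, hμR, hνR, hlam, mk_sub_mk', mk_mul_mk, mk_add_mk]
    refine mk_ext _ _ fun ω => ?_
    simp only [Pi.mul_apply, Pi.add_apply]
    rw [div_mul_cancel₀ _ (hd ω).ne']
    ring
  have hx : x = sx • a + (1 - sx) • b := by
    funext i
    simp only [Pi.add_apply, Pi.smul_apply, smul_eq_mul]
    rw [hai, hbi]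
    linear_combination (y i - x i) * hkx
  have hy : y = sy • a + (1 - sy) • b := by
    funext i
    simp only [Pi.add_apply, Pi.smul_apply, smul_eq_mul]
    rw [hai, hbi]
    linear_combination (y i - x i) * hky
  have hwseg : lam • x + (1 - lam) • y = sw • a + (1 - sw) • b := by
    funext i
    simp only [Pi.add_apply, Pi.smul_apply, smul_eq_mul]
    rw [hai, hbi]
    linear_combination (y i - x i) * hkw
  have hSeg := hseg a b hane
  have hTx : T x ∈ {z | ∃ l : Ω →ₘ[P] ℝ, 0 ≤ l ∧ l ≤ 1 ∧ z = l • T a + (1 - l) • T b} := by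
    rw [← hSeg]; exact ⟨x, ⟨sx, hsx0, hsx1, hx⟩, rfl⟩
  have hTy : T y ∈ {z | ∃ l : Ω →ₘ[P] ℝ, 0 ≤ l ∧ l ≤ 1 ∧ z = l • T a + (1 - l) • T b} := by
    rw [← hSeg]; exact ⟨y, ⟨sy, hsy0, hsy1, hy⟩, rfl⟩
  have hTw : T (lam • x + (1 - lam) • y)
      ∈ {z | ∃ l : Ω →ₘ[P] ℝ, 0 ≤ l ∧ l ≤ 1 ∧ z = l • T a + (1 - l) • T b} := by
    rw [← hSeg]; exact ⟨lam • x + (1 - lam) • y, ⟨sw, hsw0, hsw1, hwseg⟩, rfl⟩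
  obtain ⟨α, -, -, hTxe⟩ := hTx
  obtain ⟨β, -, -, hTye⟩ := hTy
  obtain ⟨γ, -, -, hTwe⟩ := hTw
  obtain ⟨gα, hgαm, hα⟩ := exists_rep α
  obtain ⟨gβ, hgβm, hβ⟩ := exists_rep β
  obtain ⟨gγ, hgγm, hγ⟩ := exists_rep γ
  set A : Set Ω := {ω | gα ω = gβ ω} with hAdef
  have hAm : MeasurableSet A := measurableSet_eq_fun hgαm hgβm
  set e := ind P hAm with hedef
  have hindm : e = mk (A.indicator fun _ => (1:ℝ)) (aestronglyMeasurable_const.indicator hAm) :=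
    rfl
  have heαβ : e * (α - β) = 0 := by
    rw [hindm, hα, hβ, mk_sub_mk', mk_mul_mk, zero_def]
    refine mk_ext _ _ fun ω => ?_
    simp only [Pi.mul_apply, Set.indicator_apply]
    by_cases h : ω ∈ A
    · have hg : gα ω = gβ ω := h
      simp [hg, h]
    · simp [h]
  have heTxTy : e • T x = e • T y := by
    funext i
    have h1 := congrFun hTxe i
    have h2 := congrFun hTye i
    simp only [Pi.add_apply, Pi.smul_apply, smul_eq_mul] at h1 h2 ⊢
    linear_combination e * h1 - e * h2 + (T a i - T b i) * heαβ
  have hexy : e • x = e • y := loc_inj T hinj hloc hAm heTxTy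
  have heab : e • a = e • b := by
    funext i
    have hx' := congrFun hexy i
    simp only [Pi.smul_apply, smul_eq_mul] at hx' ⊢
    rw [hai, hbi]
    linear_combination (μR - νR) * hx'
  have heTab : e • T a = e • T b := loc_map T hloc hAm heab
  have hglm : Measurable (fun ω => if gα ω = gβ ω then (1:ℝ)
      else (gγ ω - gβ ω) / (gα ω - gβ ω)) :=
    Measurable.ite hAm measurable_const ((hgγm.sub hgβm).div (hgαm.sub hgβm))
  set lam' : Ω →ₘ[P] ℝ := mk _ hglm.aestronglyMeasurable with hlam'd
  have hkey : lam' * (α - β) + e * (γ - β) = γ - β := by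
    rw [hlam'd, hindm, hα, hβ, hγ, mk_sub_mk', mk_sub_mk', mk_mul_mk, mk_mul_mk, mk_add_mk]
    refine mk_ext _ _ fun ω => ?_
    simp only [Pi.mul_apply, Pi.add_apply, Set.indicator_apply, hAdef, Set.mem_setOf_eq]
    by_cases h : gα ω = gβ ω
    · simp [h]
    · rw [if_neg h, if_neg h, div_mul_cancel₀ _ (sub_ne_zero_of_ne h)]
      ring
  refine ⟨lam', ?_⟩
  funext i
  have h1 := congrFun hTxe i
  have h2 := congrFun hTye i
  have h3 := congrFun hTwe i
  have h4 := congrFun heTab i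
  simp only [Pi.add_apply, Pi.smul_apply, smul_eq_mul] at h1 h2 h3 h4 ⊢
  linear_combination h3 - lam' * h1 - (1 - lam') * h2 - (T a i - T b i) * hkey + (γ - β) * h4

end WuLongAux

/-- Proposition 3.5: a bijection `T : (L⁰)ⁿ → (L⁰)ⁿ` with the local
property which maps each `L⁰`-line segment onto an `L⁰`-line segment maps each
`L⁰`-line onto an `L⁰`-line. -/
theorem segments_onto_segments_implies_lines_onto_lines
    [IsProbabilityMeasure P] (n : ℕ)
    (T : (Fin n → Ω →ₘ[P] ℝ) → (Fin n → Ω →ₘ[P] ℝ))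
    (hbij : Function.Bijective T)
    (hloc : ∀ (x : Fin n → Ω →ₘ[P] ℝ) (A : Set Ω) (hA : MeasurableSet A),
        ind P hA • T (ind P hA • x) = ind P hA • T x)
    (hseg : ∀ x y : Fin n → Ω →ₘ[P] ℝ, x ≠ y →
        T '' {z | ∃ lam : Ω →ₘ[P] ℝ, 0 ≤ lam ∧ lam ≤ 1 ∧ z = lam • x + (1 - lam) • y}
          = {z | ∃ lam : Ω →ₘ[P] ℝ, 0 ≤ lam ∧ lam ≤ 1 ∧
              z = lam • T x + (1 - lam) • T y}) :
    ∀ x y : Fin n → Ω →ₘ[P] ℝ, x ≠ y →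
      T '' {z | ∃ lam : Ω →ₘ[P] ℝ, z = lam • x + (1 - lam) • y}
        = {z | ∃ lam : Ω →ₘ[P] ℝ, z = lam • T x + (1 - lam) • T y} := by
  obtain ⟨Tinv, hleft, hright⟩ := Function.bijective_iff_has_inverse.1 hbij
  have hTinv_inj : Function.Injective Tinv := hright.injective
  have hloc' : ∀ (x : Fin n → Ω →ₘ[P] ℝ) (A : Set Ω) (hA : MeasurableSet A),
      ind P hA • Tinv (ind P hA • x) = ind P hA • Tinv x := by
    intro x A hA
    apply WuLongAux.loc_inj T hbij.injective hloc hA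
    rw [hright, hright]
    funext i
    simp only [Pi.smul_apply, smul_eq_mul]
    linear_combination (x i) * WuLongAux.ind_mul_self (P := P) hA
  have hseg' : ∀ u v : Fin n → Ω →ₘ[P] ℝ, u ≠ v →
      Tinv '' {z | ∃ lam : Ω →ₘ[P] ℝ, 0 ≤ lam ∧ lam ≤ 1 ∧ z = lam • u + (1 - lam) • v}
        = {z | ∃ lam : Ω →ₘ[P] ℝ, 0 ≤ lam ∧ lam ≤ 1 ∧
            z = lam • Tinv u + (1 - lam) • Tinv v} := by
    intro u v huv
    have hne : Tinv u ≠ Tinv v := fun h => huv (by rw [← hright u, ← hright v, h])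
    have h1 := hseg (Tinv u) (Tinv v) hne
    rw [hright, hright] at h1
    rw [← h1, ← Set.image_comp]
    have hid : Tinv ∘ T = id := funext hleft
    rw [hid, Set.image_id]
  intro x y hxy
  apply Set.Subset.antisymm
  · exact WuLongAux.core T hbij.injective hloc hseg hxy
  · intro z hz
    have hne : T x ≠ T y := fun h => hxy (hbij.injective h)
    have hsub := WuLongAux.core Tinv hTinv_inj hloc' hseg' hne
    have hz2 : Tinv z ∈ {w : Fin n → Ω →ₘ[P] ℝ |
        ∃ lam : Ω →ₘ[P] ℝ, w = lam • x + (1 - lam) • y} := by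
      have hmem := hsub ⟨z, hz, rfl⟩
      rwa [hleft x, hleft y] at hmem
    exact ⟨Tinv z, hz2, hright z⟩
end
end

section
/- Let Ω = [0,1) with its Borel σ-algebra and Lebesgue measure P, and let n ≥ 1. Define T : (L^0)^n → (L^0)^n by (Tx)(ω) = x(ω + 1/2) for ω ∈ [0,1/2) and (Tx)(ω) = x(ω − 1/2) for ω ∈ [1/2,1). Then: T(θ) = θ; T ∘ T is the identity, so T is a bijection; T maps every L^0-line onto an L^0-line (for distinct x, y, the image of l(x,y) under T equals l(Tx, Ty)); but T does not have the local property (indeed for A = [0,1/2), Ĩ_A T(Ĩ_A x) ≠ Ĩ_A T(x) for suitable x), and consequently T is not L^0-affine linear. -/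
/-!
Statements from "The fundamental theorem of affine geometry in `(L⁰)ⁿ`" (Wu–Long).

`L⁰`, the algebra of equivalence classes (under `P`-a.e. equality) of real valued
random variables on a probability space `(Ω, F, P)`, is modeled as `Ω →ₘ[P] ℝ`,
and `(L⁰)ⁿ` as `Fin n → (Ω →ₘ[P] ℝ)` with the pointwise `L⁰`-module structure.
-/

open MeasureTheory

noncomputable section

variable {Ω : Type*} [MeasurableSpace Ω] {P : Measure Ω}

/-- **Statement 17, the map `T`** (Example 3.4): `Ω = [0,1)` with the Borel σ-algebra
and Lebesgue measure is realized as the additive circle `AddCircle (1 : ℝ)`; the map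
`T : (L⁰)ⁿ → (L⁰)ⁿ`, `(Tx)(ω) = x(ω + 1/2 mod 1)`, i.e. `(Tx)(ω) = x(ω + 1/2)` for
`ω ∈ [0, 1/2)` and `(Tx)(ω) = x(ω - 1/2)` for `ω ∈ [1/2, 1)`. -/
def shiftMap (n : ℕ) :
    (Fin n → AddCircle (1 : ℝ) →ₘ[(volume : Measure (AddCircle (1 : ℝ)))] ℝ) →
    (Fin n → AddCircle (1 : ℝ) →ₘ[(volume : Measure (AddCircle (1 : ℝ)))] ℝ) :=
  fun x i => (x i).compMeasurePreserving (fun ω => ω + (((1 / 2 : ℝ)) : AddCircle (1 : ℝ)))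
    (measurePreserving_add_right volume _)

namespace ShiftMapProof
open MeasureTheory Set AEEqFun

local notation "Ω₁" => AddCircle (1 : ℝ)

noncomputable def S (f : Ω₁ →ₘ[(volume : Measure Ω₁)] ℝ) : Ω₁ →ₘ[(volume : Measure Ω₁)] ℝ :=
  f.compMeasurePreserving (fun ω => ω + (((1 / 2 : ℝ)) : Ω₁))
    (measurePreserving_add_right volume _)

lemma shiftMap_apply (n : ℕ) (x : Fin n → Ω₁ →ₘ[(volume : Measure Ω₁)] ℝ) (i : Fin n) :
    shiftMap n x i = S (x i) := rfl

noncomputable abbrev tr : Ω₁ → Ω₁ := fun ω => ω + (((1 / 2 : ℝ)) : Ω₁)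

lemma tr_mp : MeasurePreserving tr volume volume := measurePreserving_add_right volume _

lemma coeFn_S (f : Ω₁ →ₘ[(volume : Measure Ω₁)] ℝ) : ⇑(S f) =ᵐ[volume] ⇑f ∘ tr :=
  f.coeFn_compMeasurePreserving tr_mp

lemma comp_ae {g g' : Ω₁ → ℝ} (h : g =ᵐ[volume] g') : g ∘ tr =ᵐ[volume] g' ∘ tr :=
  tr_mp.quasiMeasurePreserving.ae_eq_comp h

lemma S_add (a b : Ω₁ →ₘ[(volume : Measure Ω₁)] ℝ) : S (a + b) = S a + S b := by
  apply AEEqFun.ext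
  filter_upwards [coeFn_S (a + b), comp_ae (coeFn_add a b), coeFn_add (S a) (S b),
    coeFn_S a, coeFn_S b] with ω h1 h2 h3 h4 h5
  simp only [Function.comp_apply, Pi.add_apply] at *
  rw [h1, h2, h3, h4, h5]

lemma S_mul (a b : Ω₁ →ₘ[(volume : Measure Ω₁)] ℝ) : S (a * b) = S a * S b := by
  apply AEEqFun.ext
  filter_upwards [coeFn_S (a * b), comp_ae (coeFn_mul a b), coeFn_mul (S a) (S b),
    coeFn_S a, coeFn_S b] with ω h1 h2 h3 h4 h5
  simp only [Function.comp_apply, Pi.mul_apply] at *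
  rw [h1, h2, h3, h4, h5]

lemma S_sub (a b : Ω₁ →ₘ[(volume : Measure Ω₁)] ℝ) : S (a - b) = S a - S b := by
  apply AEEqFun.ext
  filter_upwards [coeFn_S (a - b), comp_ae (coeFn_sub a b), coeFn_sub (S a) (S b),
    coeFn_S a, coeFn_S b] with ω h1 h2 h3 h4 h5
  simp only [Function.comp_apply, Pi.sub_apply] at *
  rw [h1, h2, h3, h4, h5]

lemma S_zero : S (0 : Ω₁ →ₘ[(volume : Measure Ω₁)] ℝ) = 0 := by
  apply AEEqFun.ext
  filter_upwards [coeFn_S (0 : Ω₁ →ₘ[(volume : Measure Ω₁)] ℝ),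
    comp_ae (coeFn_zero (β := ℝ) (μ := (volume : Measure Ω₁))),
    coeFn_zero (β := ℝ) (μ := (volume : Measure Ω₁))] with ω h1 h2 h3
  simp only [Function.comp_apply, Pi.zero_apply] at *
  rw [h1, h2, h3]

lemma S_one : S (1 : Ω₁ →ₘ[(volume : Measure Ω₁)] ℝ) = 1 := by
  apply AEEqFun.ext
  filter_upwards [coeFn_S (1 : Ω₁ →ₘ[(volume : Measure Ω₁)] ℝ),
    comp_ae (coeFn_one (β := ℝ) (μ := (volume : Measure Ω₁))),
    coeFn_one (β := ℝ) (μ := (volume : Measure Ω₁))] with ω h1 h2 h3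
  simp only [Function.comp_apply, Pi.one_apply] at *
  rw [h1, h2, h3]

lemma tr_tr (ω : Ω₁) : tr (tr ω) = ω := by
  show ω + _ + _ = ω
  rw [add_assoc, ← AddCircle.coe_add]
  norm_num [AddCircle.coe_period]

lemma S_S (a : Ω₁ →ₘ[(volume : Measure Ω₁)] ℝ) : S (S a) = a := by
  apply AEEqFun.ext
  filter_upwards [coeFn_S (S a), comp_ae (coeFn_S a)] with ω h1 h2
  rw [h1, h2]
  simp only [Function.comp_apply, tr_tr]

lemma S_ind {A : Set Ω₁} (hA : MeasurableSet A) (hA' : MeasurableSet (tr ⁻¹' A)) :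
    S (ind volume hA) = ind volume hA' := by
  unfold S
  rw [ind, AEEqFun.compMeasurePreserving_mk]
  apply AEEqFun.ext
  refine (AEEqFun.coeFn_mk _ _).trans <| .trans ?_ (AEEqFun.coeFn_mk _ _).symm
  apply Filter.Eventually.of_forall
  intro ω
  show A.indicator _ (tr ω) = (tr ⁻¹' A).indicator _ ω
  by_cases h : tr ω ∈ A
  · rw [Set.indicator_of_mem h, Set.indicator_of_mem (show ω ∈ tr ⁻¹' A from h)]
  · rw [Set.indicator_of_notMem h, Set.indicator_of_notMem (show ω ∉ tr ⁻¹' A from h)]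

lemma ind_mul_ind {A B : Set Ω₁} (hA : MeasurableSet A) (hB : MeasurableSet B) :
    ind volume hA * ind volume hB = ind volume (hA.inter hB) := by
  rw [ind, ind, ind, AEEqFun.mk_mul_mk]
  apply AEEqFun.ext
  refine (AEEqFun.coeFn_mk _ _).trans <| .trans ?_ (AEEqFun.coeFn_mk _ _).symm
  apply Filter.Eventually.of_forall
  intro ω
  by_cases h1 : ω ∈ A <;> by_cases h2 : ω ∈ B <;>
    simp [Set.indicator_apply, h1, h2]

lemma ind_congr {A B : Set Ω₁} (hA : MeasurableSet A) (hB : MeasurableSet B) (h : A = B) :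
    ind volume hA = ind volume hB := by subst h; rfl

lemma ind_empty : ind (volume : Measure Ω₁) MeasurableSet.empty = 0 := by
  rw [ind]
  apply AEEqFun.ext
  refine (AEEqFun.coeFn_mk _ _).trans ?_
  simp only [Set.indicator_empty]
  exact (coeFn_zero (β := ℝ) (μ := (volume : Measure Ω₁))).symm

lemma ind_ne_zero {A : Set Ω₁} (hA : MeasurableSet A) (h : volume A ≠ 0) :
    ind volume hA ≠ 0 := by
  intro heq
  apply h
  have h2 : ⇑(ind volume hA) =ᵐ[volume] A.indicator (fun _ => (1:ℝ)) :=
    AEEqFun.coeFn_mk _ _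
  rw [heq] at h2
  have h3 : A.indicator (fun _ => (1:ℝ)) =ᵐ[volume] 0 :=
    h2.symm.trans (coeFn_zero (β := ℝ) (μ := (volume : Measure Ω₁)))
  refine measure_mono_null (fun ω hω => ?_) (MeasureTheory.ae_iff.mp h3)
  simp only [Set.mem_setOf_eq, Pi.zero_apply, Set.indicator_of_mem hω]
  exact one_ne_zero

-- the set A and its properties
noncomputable abbrev Aset : Set Ω₁ := ((↑·) : ℝ → Ω₁) '' Set.Ico (0 : ℝ) (1 / 2)

lemma mem_Aset_iff (x : Ω₁) :
    x ∈ Aset ↔ ((AddCircle.equivIco 1 0 x : ℝ) < 1 / 2) := by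
  constructor
  · rintro ⟨s, hs, rfl⟩
    have hs' : s ∈ Set.Ico (0:ℝ) (0 + 1) := by
      constructor
      · exact hs.1
      · rw [zero_add]; linarith [hs.2]
    have : AddCircle.equivIco 1 0 ((s : Ω₁)) = ⟨s, hs'⟩ := by
      rw [Equiv.apply_eq_iff_eq_symm_apply]; rfl
    rw [this]
    exact hs.2
  · intro h
    set r := AddCircle.equivIco 1 0 x with hr
    have hx : ((r : ℝ) : Ω₁) = x := (AddCircle.equivIco 1 0).symm_apply_apply x
    exact ⟨r, ⟨r.2.1, h⟩, hx⟩

lemma Aset_measurable : MeasurableSet Aset := by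
  have : Aset = (AddCircle.measurableEquivIco (T := 1) 0) ⁻¹'
      (Subtype.val ⁻¹' Set.Iio (1/2 : ℝ)) := by
    ext x
    rw [Set.mem_preimage, Set.mem_preimage, Set.mem_Iio, mem_Aset_iff]
    rfl
  rw [this]
  exact (AddCircle.measurableEquivIco (T := 1) 0).measurable
    (measurable_subtype_coe measurableSet_Iio)

lemma Aset_volume_ne : (volume : Measure Ω₁) Aset ≠ 0 := by
  intro h
  have hsub : Set.Ioo (0:ℝ) (1/2) ⊆ ((↑·) : ℝ → Ω₁) ⁻¹' Aset ∩ Set.Ioc 0 (0 + 1) := by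
    intro s hs
    constructor
    · exact ⟨s, ⟨hs.1.le, hs.2⟩, rfl⟩
    · constructor
      · exact hs.1
      · rw [zero_add]; linarith [hs.2]
  haveI : Fact ((0:ℝ) < 1) := ⟨one_pos⟩
  have := AddCircle.add_projection_respects_measure (1:ℝ) 0 Aset_measurable
  rw [h] at this
  have h2 := measure_mono (μ := (volume : Measure ℝ)) hsub
  rw [← this] at h2
  simp [Real.volume_Ioo] at h2

lemma tr_preimage_disjoint : Aset ∩ tr ⁻¹' Aset = ∅ := by
  ext x
  simp only [Set.mem_inter_iff, Set.mem_empty_iff_false, iff_false]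
  rintro ⟨⟨s, hs, rfl⟩, h2⟩
  rw [Set.mem_preimage] at h2
  obtain ⟨u, hu, h3⟩ := h2
  have : ((s + 1/2 : ℝ) : Ω₁) = (u : Ω₁) := by
    rw [AddCircle.coe_add]; exact h3.symm
  have hs' : s + 1/2 ∈ Set.Ico (0:ℝ) (0 + 1) := by
    constructor
    · linarith [hs.1]
    · rw [zero_add]; linarith [hs.2]
  have hu' : u ∈ Set.Ico (0:ℝ) (0 + 1) := by
    constructor
    · exact hu.1
    · rw [zero_add]; linarith [hu.2]
  rw [AddCircle.coe_eq_coe_iff_of_mem_Ico hs' hu'] at this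
  linarith [hu.2, hs.1]

end ShiftMapProof

open ShiftMapProof

/-- Example 3.4: `T = shiftMap n` satisfies `T 0 = 0`, `T ∘ T = id`
(hence `T` is a bijection) and maps every `L⁰`-line onto an `L⁰`-line, but `T` fails the
local property (witnessed by the set `A = [0, 1/2)`), and `T` is not `L⁰`-affine linear. -/
theorem shiftMap_maps_lines_but_not_affine (n : ℕ) (hn : 1 ≤ n) :
    shiftMap n 0 = 0 ∧
    shiftMap n ∘ shiftMap n = id ∧
    Function.Bijective (shiftMap n) ∧
    (∀ x y : Fin n → AddCircle (1 : ℝ) →ₘ[volume] ℝ, x ≠ y →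
        shiftMap n '' {z | ∃ lam : AddCircle (1 : ℝ) →ₘ[volume] ℝ,
            z = lam • x + (1 - lam) • y}
          = {z | ∃ lam : AddCircle (1 : ℝ) →ₘ[volume] ℝ,
              z = lam • shiftMap n x + (1 - lam) • shiftMap n y}) ∧
    (∃ (hA : MeasurableSet (((↑·) : ℝ → AddCircle (1 : ℝ)) '' Set.Ico (0 : ℝ) (1 / 2)))
        (x : Fin n → AddCircle (1 : ℝ) →ₘ[volume] ℝ),
        ind volume hA • shiftMap n (ind volume hA • x) ≠ ind volume hA • shiftMap n x) ∧
    ¬ (∀ (x : Fin n → AddCircle (1 : ℝ) →ₘ[volume] ℝ) (A : Set (AddCircle (1 : ℝ)))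
        (hA : MeasurableSet A),
        ind volume hA • shiftMap n (ind volume hA • x) = ind volume hA • shiftMap n x) ∧
    ¬ ((∀ x y : Fin n → AddCircle (1 : ℝ) →ₘ[volume] ℝ,
          shiftMap n (x + y) - shiftMap n 0
            = (shiftMap n x - shiftMap n 0) + (shiftMap n y - shiftMap n 0)) ∧
       (∀ (ξ : AddCircle (1 : ℝ) →ₘ[volume] ℝ)
          (x : Fin n → AddCircle (1 : ℝ) →ₘ[volume] ℝ),
          shiftMap n (ξ • x) - shiftMap n 0 = ξ • (shiftMap n x - shiftMap n 0))) := by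
  have hT0 : shiftMap n 0 = 0 := by
    funext i
    rw [shiftMap_apply]
    exact S_zero
  have hTT : shiftMap n ∘ shiftMap n = id := by
    funext x
    show shiftMap n (shiftMap n x) = x
    funext i
    exact S_S (x i)
  have hinv : Function.Involutive (shiftMap n) := fun x => congrFun hTT x
  have hkey : ∀ (lam : AddCircle (1 : ℝ) →ₘ[volume] ℝ)
      (x y : Fin n → AddCircle (1 : ℝ) →ₘ[volume] ℝ),
      shiftMap n (lam • x + (1 - lam) • y)
        = S lam • shiftMap n x + (1 - S lam) • shiftMap n y := by
    intro lam x y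
    funext i
    show S ((lam • x + (1 - lam) • y) i)
      = (S lam • shiftMap n x + (1 - S lam) • shiftMap n y) i
    simp only [Pi.add_apply, Pi.smul_apply, smul_eq_mul, shiftMap_apply]
    rw [S_add, S_mul, S_mul, S_sub, S_one]
  have hlines : ∀ x y : Fin n → AddCircle (1 : ℝ) →ₘ[volume] ℝ, x ≠ y →
      shiftMap n '' {z | ∃ lam : AddCircle (1 : ℝ) →ₘ[volume] ℝ,
          z = lam • x + (1 - lam) • y}
        = {z | ∃ lam : AddCircle (1 : ℝ) →ₘ[volume] ℝ,
            z = lam • shiftMap n x + (1 - lam) • shiftMap n y} := by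
    intro x y _
    ext w
    simp only [Set.mem_image, Set.mem_setOf_eq]
    constructor
    · rintro ⟨z, ⟨lam, rfl⟩, rfl⟩
      exact ⟨S lam, hkey lam x y⟩
    · rintro ⟨lam, rfl⟩
      refine ⟨S lam • x + (1 - S lam) • y, ⟨S lam, rfl⟩, ?_⟩
      rw [hkey, S_S]
  -- the local-property failure
  have hA' : MeasurableSet (tr ⁻¹' Aset) :=
    Aset_measurable.preimage (measurable_add_const _)
  have e_ne : ind volume Aset_measurable ≠ 0 := ind_ne_zero _ Aset_volume_ne
  have hES : S (ind volume Aset_measurable) = ind volume hA' := S_ind _ hA'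
  have hmul0 : ind volume Aset_measurable * ind volume hA' = 0 := by
    rw [ind_mul_ind, ind_congr _ MeasurableSet.empty tr_preimage_disjoint, ind_empty]
  have he2 : ind volume Aset_measurable * ind volume Aset_measurable
      = ind volume Aset_measurable := by
    rw [ind_mul_ind]
    exact ind_congr _ _ (Set.inter_self _)
  have hloc : ind volume Aset_measurable •
        shiftMap n (ind volume Aset_measurable • (fun _ => 1 :
          Fin n → AddCircle (1 : ℝ) →ₘ[volume] ℝ))
      ≠ ind volume Aset_measurable •
        shiftMap n (fun _ => 1 : Fin n → AddCircle (1 : ℝ) →ₘ[volume] ℝ) := by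
    intro hcon
    have h := congrFun hcon ⟨0, hn⟩
    simp only [Pi.smul_apply, shiftMap_apply, smul_eq_mul] at h
    rw [mul_one, hES, hmul0, S_one, mul_one] at h
    exact e_ne h.symm
  refine ⟨hT0, hTT, hinv.bijective, hlines, ⟨Aset_measurable, _, hloc⟩,
    fun hall => hloc (hall _ _ _), ?_⟩
  rintro ⟨-, hsmul⟩
  apply hloc
  have h := hsmul (ind volume Aset_measurable) (fun _ => 1)
  rw [hT0, sub_zero, sub_zero] at h
  rw [h]
  funext i
  simp only [Pi.smul_apply, smul_eq_mul, ← mul_assoc, he2]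
end
end
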